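/- arXiv:2503.14796 — 4 statements merged into one kernel-verified Lean document; each statement's English description precedes it below -/
import Mathlib

section
/- Let $T$ be even and let the spending pattern $(c_t)_{t=1}^T$ be given by $c_t = 1$ for $t \le T/2$ and $c_t = 0$ for $t > T/2$. Then for any sub-pacing sequence $(d_t)_{t=1}^T$ with $0 \le d_t \le 1/2$ for all $t$, the unnormalized EMD satisfies $\sum_{t=1}^T \left|\sum_{s=1}^t (c_s - d_s)\right| \ge T^2/16$. -/
open Finset

lemma sum_range_add_one (n : ℕ) :
    ∑ k ∈ range n, ((k : ℝ) + 1) = n * (n + 1) / 2 := by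
  induction n with
  | zero => simp
  | succ m ih => rw [Finset.sum_range_succ, ih]; push_cast; ring

/-- The "spend everything in the first half" pattern is at unnormalized EMD at
least `T²/16` from any sub-pacing sequence with per-round budget `1/2`. -/
theorem emd_spend_first_half_lower_bound (T : ℕ) (hT : Even T) (c : Fin T → ℝ)
    (hc : ∀ t : Fin T, c t = if (t : ℕ) + 1 ≤ T / 2 then 1 else 0)
    (d : Fin T → ℝ) (hd : ∀ t, 0 ≤ d t ∧ d t ≤ 1 / 2) :
    (T : ℝ) ^ 2 / 16 ≤ ∑ t, |∑ s ∈ Finset.Iic t, (c s - d s)| := by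
  set n := T / 2 with hn
  have hnT : n ≤ T := Nat.div_le_self T 2
  have hT2 : T = 2 * n := by
    obtain ⟨m, hm⟩ := hT
    omega
  -- step 1: pointwise lower bound on first-half terms
  have step1 : ∀ t : Fin T, (t : ℕ) + 1 ≤ n →
      ((t : ℕ) + 1 : ℝ) / 2 ≤ |∑ s ∈ Finset.Iic t, (c s - d s)| := by
    intro t ht
    have hsum : ((t : ℕ) + 1 : ℝ) / 2 ≤ ∑ s ∈ Finset.Iic t, (c s - d s) := by
      have : ∑ s ∈ Finset.Iic t, (1 / 2 : ℝ) ≤ ∑ s ∈ Finset.Iic t, (c s - d s) := by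
        apply Finset.sum_le_sum
        intro s hs
        have hst : (s : ℕ) ≤ (t : ℕ) := Fin.le_iff_val_le_val.mp (Finset.mem_Iic.mp hs)
        have hcs : c s = 1 := by rw [hc s]; simp; omega
        have := (hd s).2
        rw [hcs]; linarith
      calc ((t : ℕ) + 1 : ℝ) / 2 = (Finset.Iic t).card * (1 / 2 : ℝ) := by
            rw [Fin.card_Iic]; push_cast; ring
        _ = ∑ s ∈ Finset.Iic t, (1 / 2 : ℝ) := by rw [Finset.sum_const, nsmul_eq_mul]
        _ ≤ _ := this
    calc ((t : ℕ) + 1 : ℝ) / 2 ≤ ∑ s ∈ Finset.Iic t, (c s - d s) := hsum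
      _ ≤ |∑ s ∈ Finset.Iic t, (c s - d s)| := le_abs_self _
  -- step 2: restrict sum to first half
  have step2 : ∑ t ∈ univ.filter (fun t : Fin T => (t : ℕ) + 1 ≤ n),
      |∑ s ∈ Finset.Iic t, (c s - d s)| ≤ ∑ t, |∑ s ∈ Finset.Iic t, (c s - d s)| := by
    apply Finset.sum_le_sum_of_subset_of_nonneg (Finset.filter_subset _ _)
    intro t _ _
    exact abs_nonneg _
  have step3 : ∑ t ∈ univ.filter (fun t : Fin T => (t : ℕ) + 1 ≤ n),
      (((t : ℕ) : ℝ) + 1) / 2 ≤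
      ∑ t ∈ univ.filter (fun t : Fin T => (t : ℕ) + 1 ≤ n),
      |∑ s ∈ Finset.Iic t, (c s - d s)| := by
    apply Finset.sum_le_sum
    intro t ht
    exact step1 t (Finset.mem_filter.mp ht).2
  -- compute the filtered sum
  have comp : ∑ t ∈ univ.filter (fun t : Fin T => (t : ℕ) + 1 ≤ n),
      (((t : ℕ) : ℝ) + 1) / 2 = (n : ℝ) * (n + 1) / 4 := by
    rw [Finset.sum_filter]
    rw [Fin.sum_univ_eq_sum_range (fun k => if k + 1 ≤ n then ((k : ℝ) + 1) / 2 else 0) T]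
    rw [← Finset.sum_filter]
    have hfr : (range T).filter (fun k => k + 1 ≤ n) = range n := by
      ext k; simp; omega
    rw [hfr]
    have : ∑ k ∈ range n, ((k : ℝ) + 1) / 2 = (∑ k ∈ range n, ((k : ℝ) + 1)) / 2 := by
      rw [Finset.sum_div]
    rw [this, sum_range_add_one]; ring
  have hTn : (T : ℝ) = 2 * n := by rw [hT2]; push_cast; ring
  have hfin : (T : ℝ) ^ 2 / 16 ≤ (n : ℝ) * (n + 1) / 4 := by
    rw [hTn]
    have : (0 : ℝ) ≤ n := Nat.cast_nonneg n
    nlinarith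
  linarith [step2, step3, comp.ge, comp.le]
end

section
/- Let $(\lambda_t)_{t=1}^T$ be nonnegative with $|\lambda_{t+1}-\lambda_t| \le \eta$, let $(c_t)_{t=1}^T$ be reals, and let $(d_t)_{t=1}^T$ satisfy $0 \le d_t \le B/T$ for all $t$ and $\sum_t d_t = \sum_t c_t$, with $\sum_{t=1}^T |\sum_{s=1}^t (c_s - d_s)| \le D$. Then $\sum_{t=1}^T \lambda_t (c_t - B/T) \le \eta D$. -/
open Finset

/-- If the spending pattern `(c_t)` is within unnormalized EMD `D` of a
sub-pacing pattern `(d_t)` with the same total sum, then a slowly-varying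
nonnegative dual sequence incurs Lagrangian term at most `η D`. -/
theorem lagrangian_term_le_eta_D (T : ℕ) (B : ℝ) (hB : 0 < B) (hT : 0 < T)
    (η D : ℝ) (hη : 0 ≤ η) (hD : 0 ≤ D)
    (lam c d : ℕ → ℝ) (hlam : ∀ t, 0 ≤ lam t)
    (hlip : ∀ t, t + 1 < T → |lam (t + 1) - lam t| ≤ η)
    (hd : ∀ t, 0 ≤ d t ∧ d t ≤ B / T)
    (hsum : ∑ t ∈ range T, d t = ∑ t ∈ range T, c t)
    (hemd : ∑ t ∈ range T, |∑ s ∈ range (t + 1), (c s - d s)| ≤ D) :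
    ∑ t ∈ range T, lam t * (c t - B / T) ≤ η * D := by
  have key : ∀ t, lam t * (c t - B / T) ≤ lam t * (c t - d t) := by
    intro t
    have := (hd t).2
    nlinarith [hlam t]
  calc ∑ t ∈ range T, lam t * (c t - B / T)
      ≤ ∑ t ∈ range T, lam t * (c t - d t) := Finset.sum_le_sum fun t _ => key t
    _ ≤ η * D := by
        have hzero : ∑ t ∈ range T, (c t - d t) = 0 := by
          rw [Finset.sum_sub_distrib, hsum]; ring
        have abel := Finset.sum_range_by_parts (M := ℝ) lam (fun s => c s - d s) T
        simp only [smul_eq_mul] at abel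
        rw [abel, hzero, mul_zero, zero_sub]
        have hbound : ∑ i ∈ range (T - 1), (lam (i + 1) - lam i) *
            ∑ s ∈ range (i + 1), (c s - d s)
            ≥ -(η * D) := by
          have h1 : ∀ i ∈ range (T - 1),
              -(η * |∑ s ∈ range (i + 1), (c s - d s)|) ≤
              (lam (i + 1) - lam i) * ∑ s ∈ range (i + 1), (c s - d s) := by
            intro i hi
            have hiT : i + 1 < T := by
              have := Finset.mem_range.mp hi; omega
            have := hlip i hiT
            have habs : |(lam (i + 1) - lam i) * ∑ s ∈ range (i + 1), (c s - d s)|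
                ≤ η * |∑ s ∈ range (i + 1), (c s - d s)| := by
              rw [abs_mul]
              exact mul_le_mul_of_nonneg_right this (abs_nonneg _)
            linarith [neg_abs_le ((lam (i + 1) - lam i) * ∑ s ∈ range (i + 1), (c s - d s))]
          have h2 : ∑ i ∈ range (T - 1), -(η * |∑ s ∈ range (i + 1), (c s - d s)|) ≤
              ∑ i ∈ range (T - 1), (lam (i + 1) - lam i) * ∑ s ∈ range (i + 1), (c s - d s) :=
            Finset.sum_le_sum h1
          have h3 : ∑ i ∈ range (T - 1), |∑ s ∈ range (i + 1), (c s - d s)| ≤ D := by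
            refine le_trans (Finset.sum_le_sum_of_subset_of_nonneg
              (Finset.range_subset_range.mpr (by omega)) (fun i _ _ => abs_nonneg _)) hemd
          have h4 : ∑ i ∈ range (T - 1), -(η * |∑ s ∈ range (i + 1), (c s - d s)|) =
              -(η * ∑ i ∈ range (T - 1), |∑ s ∈ range (i + 1), (c s - d s)|) := by
            rw [Finset.mul_sum, Finset.sum_neg_distrib]
          rw [h4] at h2
          have : η * ∑ i ∈ range (T - 1), |∑ s ∈ range (i + 1), (c s - d s)| ≤ η * D :=
            mul_le_mul_of_nonneg_left h3 hη
          linarith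
        linarith
end

section
/- Let $T$ be divisible by $w$ and let $(c_t)_{t=1}^T$ be a sequence with $c_t \in [0,1]$ such that $\sum_{t=kw+1}^{(k+1)w} c_t \le Bw/T$ for each $k = 0, \dots, T/w - 1$, where $B \le T$. Define $d_t = \frac{1}{w}\sum_{s=(\lceil t/w\rceil-1)w+1}^{\lceil t/w\rceil w} c_s$. Then $(d_t)$ satisfies $0 \le d_t \le B/T$, $\sum_t d_t = \sum_t c_t$, and $\sum_{t=1}^T |\sum_{s=1}^t (c_s - d_s)| \le wT$. -/
open Finset

/-- Lemma 1: a spending pattern spending at most `Bw/T` in each disjoint window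
of length `w` is within unnormalized EMD `wT` of the sub-pacing pattern obtained
by averaging within each window. -/
theorem window_spending_within_EMD_wT (T w : ℕ) (hw : 0 < w) (hdvd : w ∣ T)
    (B : ℝ) (hB0 : 0 ≤ B) (hB : B ≤ T)
    (c : ℕ → ℝ) (hc : ∀ t, c t ∈ Set.Icc (0 : ℝ) 1)
    (hwin : ∀ k < T / w, ∑ t ∈ Finset.Ico (k * w) ((k + 1) * w), c t ≤ B * w / T)
    (d : ℕ → ℝ)
    (hd : ∀ t, d t = (∑ s ∈ Finset.Ico (t / w * w) (t / w * w + w), c s) / w) :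
    (∀ t < T, 0 ≤ d t ∧ d t ≤ B / T) ∧
    (∑ t ∈ range T, d t = ∑ t ∈ range T, c t) ∧
    (∑ t ∈ range T, |∑ s ∈ range (t + 1), (c s - d s)| ≤ w * T) := by
  have hw0 : (0:ℝ) < w := by exact_mod_cast hw
  have hdconst : ∀ k, ∀ s ∈ Finset.Ico (k*w) (k*w + w),
      d s = (∑ u ∈ Finset.Ico (k*w) (k*w+w), c u) / w := by
    intro k s hs
    rw [Finset.mem_Ico] at hs
    have hdiv : s / w = k := Nat.div_eq_of_lt_le hs.1 (by rw [Nat.succ_mul]; exact hs.2)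
    rw [hd s, hdiv]
  have hA : ∀ k, ∑ s ∈ Finset.Ico (k*w) (k*w+w), d s
      = ∑ s ∈ Finset.Ico (k*w) (k*w+w), c s := by
    intro k
    rw [Finset.sum_congr rfl (hdconst k), Finset.sum_const, Nat.card_Ico]
    have : k*w + w - k*w = w := by omega
    rw [this]
    rw [nsmul_eq_mul]
    field_simp
  have hZ : ∀ k, ∑ s ∈ range (k*w), (c s - d s) = 0 := by
    intro k
    induction k with
    | zero => simp
    | succ k ih =>
      have he : (k+1)*w = k*w + w := by ring
      rw [he, Finset.range_eq_Ico,
        ← Finset.sum_Ico_consecutive _ (Nat.zero_le (k*w)) (Nat.le_add_right _ w),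
        ← Finset.range_eq_Ico, ih, zero_add, Finset.sum_sub_distrib, hA k, sub_self]
  -- Part 1
  have h1 : ∀ t < T, 0 ≤ d t ∧ d t ≤ B / T := by
    intro t ht
    have hTpos : 0 < T := by omega
    have hTpos' : (0:ℝ) < T := by exact_mod_cast hTpos
    have hk : t / w < T / w := Nat.div_lt_div_of_lt_of_dvd hdvd ht
    have hwin' := hwin (t/w) hk
    rw [Nat.succ_mul] at hwin'
    have hnn : 0 ≤ ∑ s ∈ Finset.Ico (t / w * w) (t / w * w + w), c s :=
      Finset.sum_nonneg fun s _ => (hc s).1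
    rw [hd t]
    constructor
    · positivity
    · rw [div_le_iff₀ hw0]
      calc ∑ s ∈ Finset.Ico (t / w * w) (t / w * w + w), c s ≤ B * w / T := hwin'
        _ = B / T * w := by ring
  -- per-t bound for part 3
  have key : ∀ t < T, |∑ s ∈ range (t+1), (c s - d s)| ≤ (w:ℝ) := by
    intro t ht
    have hTpos : 0 < T := by omega
    have hTpos' : (0:ℝ) < T := by exact_mod_cast hTpos
    set k := t / w with hk
    have hkw : k * w ≤ t := Nat.div_mul_le_self t w
    have htlt : t < k*w + w := by
      have h2 := (Nat.div_lt_iff_lt_mul hw).mp (Nat.lt_succ_self k)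
      rw [Nat.succ_mul] at h2
      exact h2
    rw [Finset.range_eq_Ico,
      ← Finset.sum_Ico_consecutive _ (Nat.zero_le (k*w)) (by omega : k*w ≤ t+1),
      ← Finset.range_eq_Ico, hZ k, zero_add]
    calc |∑ s ∈ Finset.Ico (k*w) (t+1), (c s - d s)|
        ≤ ∑ s ∈ Finset.Ico (k*w) (t+1), |c s - d s| := Finset.abs_sum_le_sum_abs _ _
      _ ≤ ∑ _s ∈ Finset.Ico (k*w) (t+1), (1:ℝ) := by
          apply Finset.sum_le_sum
          intro s hs
          rw [Finset.mem_Ico] at hs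
          have hsT : s < T := by omega
          obtain ⟨hd0, hd1⟩ := h1 s hsT
          have hc0 := (hc s).1
          have hc1 := (hc s).2
          have hBT : B / T ≤ 1 := by rw [div_le_one hTpos']; exact hB
          rw [abs_le]; constructor <;> linarith
      _ = ((t + 1 - k*w : ℕ) : ℝ) := by
          rw [Finset.sum_const, Nat.card_Ico]; simp
      _ ≤ (w:ℝ) := by exact_mod_cast (by omega : t + 1 - k*w ≤ w)
  refine ⟨h1, ?_, ?_⟩
  · have hT : T / w * w = T := Nat.div_mul_cancel hdvd
    have := hZ (T/w)
    rw [hT, Finset.sum_sub_distrib, sub_eq_zero] at this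
    exact this.symm
  · calc ∑ t ∈ range T, |∑ s ∈ range (t + 1), (c s - d s)|
        ≤ ∑ t ∈ range T, (w:ℝ) := Finset.sum_le_sum fun t ht => key t (Finset.mem_range.mp ht)
      _ = T * w := by rw [Finset.sum_const, Finset.card_range]; simp
      _ = w * T := by ring
end

section
/- (Survival probability of an $\varepsilon$-step random walk.) Let $X_1, X_2, \dots$ be i.i.d. uniform on $\{-\varepsilon, +\varepsilon\}$ with $0 < \varepsilon \le 1/2$, let $\tilde{R}_n = 1/2 + \sum_{k=1}^n X_k$, and let $N = \min\{n : \tilde{R}_n \notin (0,1)\}$. Then $\Pr[N \le 1/(48\varepsilon^2)] \le 1/2$. -/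
open Finset
open scoped Classical

namespace RWalkAux

variable {M : ℕ}

noncomputable def X (k : Fin M) (ω : Fin M → Bool) : ℝ := if ω k then 1 else -1

noncomputable def S (n : Fin M) (ω : Fin M → Bool) : ℝ := ∑ k ∈ Finset.Iic n, X k ω

def flip (k : Fin M) (ω : Fin M → Bool) : Fin M → Bool := Function.update ω k (!ω k)

lemma flip_flip (k : Fin M) (ω : Fin M → Bool) : flip k (flip k ω) = ω := by
  funext j
  by_cases h : j = k
  · subst h; simp [flip]
  · simp [flip, Function.update_of_ne h]

lemma flip_ne (k : Fin M) (ω : Fin M → Bool) : flip k ω ≠ ω := by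
  intro h
  have := congrFun h k
  simp [flip] at this

lemma X_flip_self (k : Fin M) (ω : Fin M → Bool) : X k (flip k ω) = - X k ω := by
  simp only [X, flip, Function.update_self]
  cases h : ω k <;> simp

lemma X_flip_ne {j k : Fin M} (h : j ≠ k) (ω : Fin M → Bool) : X j (flip k ω) = X j ω := by
  simp [X, flip, Function.update_of_ne h]

lemma sum_flip_zero (s : Finset (Fin M → Bool)) (k : Fin M)
    (f : (Fin M → Bool) → ℝ)
    (hs : ∀ ω ∈ s, flip k ω ∈ s)
    (hf : ∀ ω, f (flip k ω) = - f ω) :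
    ∑ ω ∈ s, f ω = 0 := by
  refine Finset.sum_involution (fun ω _ => flip k ω) ?_ ?_ hs ?_
  · intro ω hω; rw [hf]; ring
  · intro ω hω _; exact flip_ne k ω
  · intro ω hω; exact flip_flip k ω

lemma S_flip {n m k : Fin M} (hk : ¬ k ≤ n) (hm : m ≤ n) (ω : Fin M → Bool) :
    S m (flip k ω) = S m ω := by
  unfold S
  refine Finset.sum_congr rfl ?_
  intro j hj
  rw [Finset.mem_Iic] at hj
  exact X_flip_ne (fun h => hk (by subst h; exact le_trans hj hm)) ω

/-- Second moment of the full sum. -/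
lemma sum_sq_full : ∑ ω : Fin M → Bool, (∑ k, X k ω) ^ 2 = M * 2 ^ M := by
  have h1 : ∀ ω : Fin M → Bool, (∑ k, X k ω) ^ 2 = ∑ j, ∑ k, X j ω * X k ω := by
    intro ω; rw [sq, Finset.sum_mul_sum]
  calc ∑ ω : Fin M → Bool, (∑ k, X k ω) ^ 2
      = ∑ j : Fin M, ∑ k : Fin M, ∑ ω : Fin M → Bool, X j ω * X k ω := by
        simp_rw [h1]; rw [Finset.sum_comm]
        exact Finset.sum_congr rfl fun j _ => Finset.sum_comm
    _ = ∑ j : Fin M, ∑ k : Fin M, if j = k then (2 : ℝ) ^ M else 0 := by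
        refine Finset.sum_congr rfl fun j _ => Finset.sum_congr rfl fun k _ => ?_
        by_cases h : j = k
        · subst h
          simp only [if_pos rfl]
          have : ∀ ω : Fin M → Bool, X j ω * X j ω = 1 := by
            intro ω; unfold X; cases ω j <;> norm_num
          simp_rw [this]
          simp [Finset.card_univ]
        · rw [if_neg h]
          exact sum_flip_zero univ k _ (fun ω _ => mem_univ _)
            (fun ω => by rw [X_flip_ne h, X_flip_self]; ring)
    _ = M * 2 ^ M := by simp [Finset.sum_ite_eq]

/-- First-hitting-time set. -/
noncomputable def A (t : ℝ) (n : Fin M) : Finset (Fin M → Bool) :=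
  univ.filter (fun ω => t ≤ |S n ω| ∧ ∀ m < n, |S m ω| < t)

lemma A_flip {t : ℝ} {n k : Fin M} (hk : ¬ k ≤ n) {ω : Fin M → Bool}
    (hω : ω ∈ A t n) : flip k ω ∈ A t n := by
  rw [A, Finset.mem_filter] at hω ⊢
  refine ⟨mem_univ _, ?_, ?_⟩
  · rw [S_flip hk le_rfl]; exact hω.2.1
  · intro m hm; rw [S_flip hk hm.le]; exact hω.2.2 m hm

lemma key (t : ℝ) (ht : 0 ≤ t) (n : Fin M) :
    t ^ 2 * (A t n).card ≤ ∑ ω ∈ A t n, (∑ k, X k ω) ^ 2 := by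
  have hsplit : ∀ ω : Fin M → Bool,
      (∑ k, X k ω) = S n ω + ∑ k ∈ (Finset.Iic n)ᶜ, X k ω := by
    intro ω; rw [S, Finset.sum_add_sum_compl]
  have hcross : ∑ ω ∈ A t n, S n ω * ∑ k ∈ (Finset.Iic n)ᶜ, X k ω = 0 := by
    have : ∀ ω ∈ A t n, S n ω * ∑ k ∈ (Finset.Iic n)ᶜ, X k ω
        = ∑ k ∈ (Finset.Iic n)ᶜ, S n ω * X k ω := fun ω _ => Finset.mul_sum _ _ _
    rw [Finset.sum_congr rfl this, Finset.sum_comm]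
    refine Finset.sum_eq_zero fun k hk => ?_
    rw [Finset.mem_compl, Finset.mem_Iic] at hk
    exact sum_flip_zero _ k _ (fun ω hω => A_flip hk hω)
      (fun ω => by rw [S_flip hk le_rfl, X_flip_self]; ring)
  have hzero : ∑ ω ∈ A t n, 2 * (S n ω * ∑ k ∈ (Finset.Iic n)ᶜ, X k ω) = 0 := by
    rw [← Finset.mul_sum, hcross, mul_zero]
  have hcheb : t ^ 2 * (A t n).card ≤ ∑ ω ∈ A t n, S n ω ^ 2 := by
    calc t ^ 2 * (A t n).card = ∑ _ω ∈ A t n, t ^ 2 := by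
          rw [Finset.sum_const, nsmul_eq_mul, mul_comm]
      _ ≤ ∑ ω ∈ A t n, S n ω ^ 2 := by
          refine Finset.sum_le_sum fun ω hω => ?_
          rw [A, Finset.mem_filter] at hω
          calc t ^ 2 ≤ |S n ω| ^ 2 := pow_le_pow_left₀ ht hω.2.1 2
            _ = S n ω ^ 2 := sq_abs _
  have hTsq : 0 ≤ ∑ ω ∈ A t n, (∑ k ∈ (Finset.Iic n)ᶜ, X k ω) ^ 2 :=
    Finset.sum_nonneg fun ω _ => sq_nonneg _
  have hexp2 : ∑ ω ∈ A t n, (∑ k, X k ω) ^ 2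
      = (∑ ω ∈ A t n, S n ω ^ 2) + ∑ ω ∈ A t n, (∑ k ∈ (Finset.Iic n)ᶜ, X k ω) ^ 2 := by
    have h : ∀ ω ∈ A t n, (∑ k, X k ω) ^ 2
        = S n ω ^ 2 + (2 * (S n ω * ∑ k ∈ (Finset.Iic n)ᶜ, X k ω)
          + (∑ k ∈ (Finset.Iic n)ᶜ, X k ω) ^ 2) := fun ω _ => by rw [hsplit ω]; ring
    rw [Finset.sum_congr rfl h, Finset.sum_add_distrib, Finset.sum_add_distrib, hzero, zero_add]
  calc t ^ 2 * (A t n).card ≤ ∑ ω ∈ A t n, S n ω ^ 2 := hcheb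
    _ ≤ (∑ ω ∈ A t n, S n ω ^ 2) + ∑ ω ∈ A t n, (∑ k ∈ (Finset.Iic n)ᶜ, X k ω) ^ 2 :=
        le_add_of_nonneg_right hTsq
    _ = ∑ ω ∈ A t n, (∑ k, X k ω) ^ 2 := hexp2.symm

end RWalkAux

/-- Survival probability of the `ε`-step random walk started at `1/2`: with
probability at least `1/2` it stays in `(0,1)` for the first `⌊1/(48ε²)⌋`
steps.  The walk is modelled by uniform sign sequences of length `M`. -/
theorem random_walk_survival (ε : ℝ) (hε : 0 < ε) (hε2 : ε ≤ 1 / 2)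
    (M : ℕ) (hM : M = Nat.floor (1 / (48 * ε ^ 2))) :
    ((Finset.univ.filter (fun ω : Fin M → Bool =>
        ∃ n : Fin M,
          (1 / 2 + ε * ∑ k ∈ Finset.Iic n, (if ω k then (1 : ℝ) else -1)) ∉
            Set.Ioo (0 : ℝ) 1)).card : ℝ) / 2 ^ M ≤ 1 / 2 := by
  classical
  set t : ℝ := 1 / (2 * ε) with htdef
  have ht0 : 0 < t := by positivity
  set E := (Finset.univ.filter (fun ω : Fin M → Bool =>
      ∃ n : Fin M,
        (1 / 2 + ε * ∑ k ∈ Finset.Iic n, (if ω k then (1 : ℝ) else -1)) ∉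
          Set.Ioo (0 : ℝ) 1)) with hE
  have hSdef : ∀ (n : Fin M) (ω : Fin M → Bool),
      (∑ k ∈ Finset.Iic n, (if ω k then (1 : ℝ) else -1)) = RWalkAux.S n ω := fun n ω => rfl
  have hdisj : ∀ n ∈ (univ : Finset (Fin M)), ∀ m ∈ (univ : Finset (Fin M)), n ≠ m →
      Disjoint (RWalkAux.A t n) (RWalkAux.A t m) := by
    intro n _ m _ hnm
    rw [Finset.disjoint_left]
    intro ω h1 h2
    rw [RWalkAux.A, Finset.mem_filter] at h1 h2
    rcases lt_or_gt_of_ne hnm with h | h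
    · exact absurd h1.2.1 (not_le.mpr (h2.2.2 n h))
    · exact absurd h2.2.1 (not_le.mpr (h1.2.2 m h))
  have hpd : ((univ : Finset (Fin M)) : Set (Fin M)).PairwiseDisjoint (RWalkAux.A t) :=
    fun n _ m _ h => hdisj n (mem_univ _) m (mem_univ _) h
  have hsub : E ⊆ Finset.univ.biUnion (RWalkAux.A t) := by
    intro ω hω
    rw [hE, Finset.mem_filter] at hω
    obtain ⟨-, n, hn⟩ := hω
    have hP : t ≤ |RWalkAux.S n ω| := by
      rw [hSdef] at hn
      rw [Set.mem_Ioo, not_and_or, not_lt, not_lt] at hn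
      rw [le_abs]
      rcases hn with h | h
      · right
        rw [htdef, div_le_iff₀ (by positivity : (0:ℝ) < 2 * ε)]
        nlinarith
      · left
        rw [htdef, div_le_iff₀ (by positivity : (0:ℝ) < 2 * ε)]
        nlinarith
    set F := (univ : Finset (Fin M)).filter (fun m : Fin M => t ≤ |RWalkAux.S m ω|) with hF
    have hnF : n ∈ F := Finset.mem_filter.mpr ⟨mem_univ _, hP⟩
    have hFne : F.Nonempty := ⟨n, hnF⟩
    have hn0 : F.min' hFne ∈ F := Finset.min'_mem F hFne
    refine Finset.mem_biUnion.mpr ⟨F.min' hFne, mem_univ _, ?_⟩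
    rw [RWalkAux.A, Finset.mem_filter]
    refine ⟨mem_univ _, (Finset.mem_filter.mp hn0).2, ?_⟩
    intro m hm
    by_contra hcon
    rw [not_lt] at hcon
    have hmF : m ∈ F := Finset.mem_filter.mpr ⟨mem_univ _, hcon⟩
    exact absurd (Finset.min'_le F m hmF) (not_le.mpr hm)
  have hkey : t ^ 2 * (E.card : ℝ) ≤ (M : ℝ) * 2 ^ M := by
    have h1 : (E.card : ℝ) ≤ ∑ n : Fin M, ((RWalkAux.A t n).card : ℝ) := by
      calc (E.card : ℝ) ≤ ((univ.biUnion (RWalkAux.A t)).card : ℝ) := by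
            exact_mod_cast Finset.card_le_card hsub
        _ = ∑ n : Fin M, ((RWalkAux.A t n).card : ℝ) := by
            rw [Finset.card_biUnion hdisj]; push_cast; rfl
    have h2 : ∑ n : Fin M, t ^ 2 * ((RWalkAux.A t n).card : ℝ)
        ≤ ∑ n : Fin M, ∑ ω ∈ RWalkAux.A t n, (∑ k, RWalkAux.X k ω) ^ 2 :=
      Finset.sum_le_sum fun n _ => RWalkAux.key t ht0.le n
    have h3 : ∑ n : Fin M, ∑ ω ∈ RWalkAux.A t n, (∑ k, RWalkAux.X k ω) ^ 2
        = ∑ ω ∈ univ.biUnion (RWalkAux.A t), (∑ k, RWalkAux.X k ω) ^ 2 :=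
      (Finset.sum_biUnion hpd).symm
    have h4 : ∑ ω ∈ univ.biUnion (RWalkAux.A t), (∑ k, RWalkAux.X k ω) ^ 2
        ≤ ∑ ω : Fin M → Bool, (∑ k, RWalkAux.X k ω) ^ 2 :=
      Finset.sum_le_sum_of_subset_of_nonneg (Finset.subset_univ _) (fun ω _ _ => sq_nonneg _)
    calc t ^ 2 * (E.card : ℝ) ≤ t ^ 2 * ∑ n : Fin M, ((RWalkAux.A t n).card : ℝ) :=
          mul_le_mul_of_nonneg_left h1 (sq_nonneg t)
      _ = ∑ n : Fin M, t ^ 2 * ((RWalkAux.A t n).card : ℝ) := Finset.mul_sum _ _ _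
      _ ≤ ∑ n : Fin M, ∑ ω ∈ RWalkAux.A t n, (∑ k, RWalkAux.X k ω) ^ 2 := h2
      _ = ∑ ω ∈ univ.biUnion (RWalkAux.A t), (∑ k, RWalkAux.X k ω) ^ 2 := h3
      _ ≤ ∑ ω : Fin M → Bool, (∑ k, RWalkAux.X k ω) ^ 2 := h4
      _ = (M : ℝ) * 2 ^ M := RWalkAux.sum_sq_full
  have hM48 : (M : ℝ) * (48 * ε ^ 2) ≤ 1 := by
    have h0 : (0:ℝ) ≤ 1 / (48 * ε ^ 2) := by positivity
    have hMle : (M : ℝ) ≤ 1 / (48 * ε ^ 2) := by rw [hM]; exact Nat.floor_le h0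
    have h48 : (0:ℝ) < 48 * ε ^ 2 := by positivity
    calc (M : ℝ) * (48 * ε ^ 2) ≤ (1 / (48 * ε ^ 2)) * (48 * ε ^ 2) :=
          mul_le_mul_of_nonneg_right hMle h48.le
      _ = 1 := by field_simp
  rw [div_le_iff₀ (by positivity : (0:ℝ) < 2 ^ M)]
  have hP2 : (0:ℝ) ≤ 2 ^ M := by positivity
  have ht2 : t ^ 2 = 1 / (4 * ε ^ 2) := by rw [htdef]; field_simp; ring
  have hε4 : (0:ℝ) < 4 * ε ^ 2 := by positivity
  have hc : (E.card : ℝ) ≤ 4 * ε ^ 2 * ((M : ℝ) * 2 ^ M) := by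
    rw [ht2] at hkey
    calc (E.card : ℝ) = (4 * ε ^ 2) * ((1 / (4 * ε ^ 2)) * (E.card : ℝ)) := by field_simp
      _ ≤ 4 * ε ^ 2 * ((M : ℝ) * 2 ^ M) := mul_le_mul_of_nonneg_left hkey hε4.le
  have h12 : 4 * ε ^ 2 * (M : ℝ) ≤ 1 / 12 := by linarith
  calc (E.card : ℝ) ≤ 4 * ε ^ 2 * ((M : ℝ) * 2 ^ M) := hc
    _ = (4 * ε ^ 2 * (M : ℝ)) * 2 ^ M := by ring
    _ ≤ (1 / 12) * 2 ^ M := mul_le_mul_of_nonneg_right h12 hP2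
    _ ≤ 1 / 2 * 2 ^ M := by linarith
end
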